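/- arXiv:2410.09506 — 2 statements merged into one kernel-verified Lean document; each statement's English description precedes it below -/
import Mathlib

section
/- For all real x ∈ [0, 1], (1/2 - e^{x/6}/(1 + e^{x/6}))² ≥ x²/579. -/
/-!
Writing `E = exp (x/6)`, the gap is `(E - 1)/(2(E + 1))`, and `E ↦ (E - 1)/(E + 1)` is increasing,
so `E` may be replaced by its cubic Taylor polynomial `p`, a lower bound for `exp` on `[0, ∞)`.
This leaves a polynomial inequality in `t = x/6 ∈ [0, 1/6]`. The constant `579` is nearly sharp
(at `x = 1` the two sides differ by about `0.06%`), which is why the quadratic Taylor bound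
does not suffice.
-/

open Real

lemma cubic_le_exp_of_nonneg {t : ℝ} (ht : 0 ≤ t) : 1 + t + t ^ 2 / 2 + t ^ 3 / 6 ≤ exp t := by
  have h := sum_le_exp_of_nonneg ht 4
  norm_num [Finset.sum_range_succ, Nat.factorial] at h
  linarith

lemma one_half_sub_exp_div_one_add_exp (y : ℝ) :
    1 / 2 - exp y / (1 + exp y) = -((exp y - 1) / (exp y + 1)) / 2 := by
  have := exp_pos y
  field_simp
  ring

lemma sub_one_div_add_one_le_sub_one_div_add_one {a b : ℝ} (ha : -1 < a) (hab : a ≤ b) :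
    (a - 1) / (a + 1) ≤ (b - 1) / (b + 1) := by
  rw [div_le_div_iff₀ (by linarith) (by linarith)]
  linarith

lemma sq_mul_le_sq_cubic_sub_one_div_add_one {t : ℝ} (ht0 : 0 ≤ t) (ht1 : t ≤ 1 / 6) :
    144 * t ^ 2 / 579 ≤
      ((1 + t + t ^ 2 / 2 + t ^ 3 / 6 - 1) / (1 + t + t ^ 2 / 2 + t ^ 3 / 6 + 1)) ^ 2 := by
  set q := 1 + t / 2 + t ^ 2 / 6 with hq
  -- with `p - 1 = t q` this is `12 (2 + t q) ≤ √579 q`, squared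
  have key : 144 * (2 + t * q) ^ 2 ≤ 579 * q ^ 2 := by
    have h := mul_nonneg ht0 (sub_nonneg.2 ht1)
    nlinarith [mul_nonneg h ht0, mul_nonneg (mul_nonneg h ht0) ht0,
      mul_nonneg (mul_nonneg (mul_nonneg h ht0) ht0) ht0,
      mul_nonneg (mul_nonneg (mul_nonneg (mul_nonneg h ht0) ht0) ht0) ht0]
  have hp : 1 + t + t ^ 2 / 2 + t ^ 3 / 6 - 1 = t * q := by rw [hq]; ring
  have hp' : 1 + t + t ^ 2 / 2 + t ^ 3 / 6 + 1 = 2 + t * q := by rw [hq]; ring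
  rw [hp, hp', div_pow, le_div_iff₀ (by positivity)]
  nlinarith [sq_nonneg t]

/-- For all x ∈ [0,1], (1/2 − e^{x/6}/(1+e^{x/6}))² ≥ x²/579. -/
theorem sigmoid_gap_sq_ge (x : ℝ) (h0 : 0 ≤ x) (h1 : x ≤ 1) :
    (1/2 - Real.exp (x/6) / (1 + Real.exp (x/6))) ^ 2 ≥ x ^ 2 / 579 := by
  obtain ⟨t, rfl⟩ : ∃ t, x = 6 * t := ⟨x / 6, by ring⟩
  rw [show 6 * t / 6 = t by ring]
  have ht0 : 0 ≤ t := by linarith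
  set p := 1 + t + t ^ 2 / 2 + t ^ 3 / 6 with hp
  have hp1 : 1 ≤ p := by rw [hp]; nlinarith [pow_nonneg ht0 3]
  have hp_nonneg : 0 ≤ (p - 1) / (p + 1) := div_nonneg (by linarith) (by linarith)
  calc (6 * t) ^ 2 / 579 = 144 * t ^ 2 / 579 / 4 := by ring
    _ ≤ ((p - 1) / (p + 1)) ^ 2 / 4 := by
      gcongr
      exact sq_mul_le_sq_cubic_sub_one_div_add_one ht0 (by linarith)
    _ ≤ ((exp t - 1) / (exp t + 1)) ^ 2 / 4 := by
      gcongr ?_ ^ 2 / 4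
      exact sub_one_div_add_one_le_sub_one_div_add_one (by linarith) (cubic_le_exp_of_nonneg ht0)
    _ = (1/2 - exp t / (1 + exp t)) ^ 2 := by rw [one_half_sub_exp_div_one_add_exp]; ring
end

section
/- The function g(x) = ln(x²) - 2 ln|1/2 - e^{x/6}/(1+e^{x/6})| is nondecreasing on (0, 1]. Consequently f(x) = x² / (1/2 - e^{x/6}/(1+e^{x/6}))² is nondecreasing on (0,1], and f(x) ≤ f(1) ≤ 579 for all x ∈ (0,1]. -/
/-!
Since `1/2 - eˣ/(1 + eˣ) = -tanh (x/2) / 2`, the ratio is `f x = (24 · φ (x/12))²` with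
`φ u = u / tanh u = u cosh u / sinh u`. Its derivative `(sinh u cosh u - u) / sinh² u` is
nonnegative because `sinh 2u ≥ 2u`, so `φ` (hence `f`) increases on `(0, ∞)`, and `g = log ∘ f`
there. The bound is tight (`f 1 ≈ 578.7`): the quadratic Taylor lower bound for `e^{1/6}` is too
weak, the cubic one suffices.
-/

open Real Set

lemma tanh_pos_of_pos {u : ℝ} (hu : 0 < u) : 0 < tanh u := by
  rw [tanh_eq_sinh_div_cosh]
  exact div_pos (sinh_pos_iff.mpr hu) (cosh_pos u)

lemma half_sub_exp_div_one_add_exp (x : ℝ) :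
    1 / 2 - exp x / (1 + exp x) = -tanh (x / 2) / 2 := by
  have hsq : exp x = exp (x / 2) ^ 2 := by rw [sq, ← exp_add, add_halves]
  rw [tanh_eq, exp_neg, hsq]
  have := exp_pos (x / 2)
  field_simp
  ring

lemma hasDerivAt_mul_cosh_div_sinh {u : ℝ} (hu : sinh u ≠ 0) :
    HasDerivAt (fun v => v * cosh v / sinh v) ((sinh u * cosh u - u) / sinh u ^ 2) u := by
  refine (((hasDerivAt_id' u).mul (hasDerivAt_cosh u)).div (hasDerivAt_sinh u) hu).congr_deriv ?_
  rw [Pi.mul_apply]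
  linear_combination (-u / sinh u ^ 2) * cosh_sq_sub_sinh_sq u

lemma monotoneOn_div_tanh : MonotoneOn (fun u : ℝ => u / tanh u) (Ioi 0) := by
  have hsinh : ∀ u ∈ Ioi (0 : ℝ), sinh u ≠ 0 := fun u hu => (sinh_pos_iff.mpr hu).ne'
  simp only [tanh_eq_sinh_div_cosh, div_div_eq_mul_div]
  refine monotoneOn_of_hasDerivWithinAt_nonneg (convex_Ioi 0)
    (fun u hu => (hasDerivAt_mul_cosh_div_sinh (hsinh u hu)).continuousAt.continuousWithinAt)
    (fun u hu => (hasDerivAt_mul_cosh_div_sinh (hsinh u (interior_subset hu))).hasDerivWithinAt)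
    fun u hu => ?_
  rw [interior_Ioi] at hu
  have : 2 * u ≤ sinh (2 * u) := self_le_sinh_iff.mpr (by linarith [hu.out])
  rw [sinh_two_mul] at this
  exact div_nonneg (by linarith) (sq_nonneg _)

noncomputable def sigmoidRatio (x : ℝ) : ℝ :=
  x ^ 2 / (1 / 2 - exp (x / 6) / (1 + exp (x / 6))) ^ 2

lemma sigmoidRatio_eq (x : ℝ) : sigmoidRatio x = (24 * (x / 12 / tanh (x / 12))) ^ 2 := by
  rw [sigmoidRatio, half_sub_exp_div_one_add_exp, show x / 6 / 2 = x / 12 by ring]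
  ring

lemma sigmoidRatio_pos {x : ℝ} (hx : 0 < x) : 0 < sigmoidRatio x := by
  have := tanh_pos_of_pos (by positivity : 0 < x / 12)
  rw [sigmoidRatio_eq]
  positivity

lemma monotoneOn_sigmoidRatio : MonotoneOn sigmoidRatio (Ioi 0) := by
  intro x hx y hy hxy
  replace hx : 0 < x / 12 := by linarith [hx.out]
  rw [sigmoidRatio_eq, sigmoidRatio_eq]
  gcongr (24 * ?_) ^ 2
  · have := tanh_pos_of_pos hx
    positivity
  · exact monotoneOn_div_tanh hx (by linarith [hy.out] : 0 < y / 12) (by linarith)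

lemma half_sub_exp_div_one_add_exp_neg {x : ℝ} (hx : 0 < x) :
    1 / 2 - exp x / (1 + exp x) < 0 := by
  rw [half_sub_exp_div_one_add_exp]
  linarith [tanh_pos_of_pos (half_pos hx)]

lemma log_sq_sub_two_mul_log_abs {x d : ℝ} (hx : x ≠ 0) (hd : d ≠ 0) :
    log (x ^ 2) - 2 * log |d| = log (x ^ 2 / d ^ 2) := by
  rw [log_div (pow_ne_zero 2 hx) (pow_ne_zero 2 hd), log_pow, log_abs]
  norm_num

lemma log_sigmoidRatio {x : ℝ} (hx : 0 < x) :
    log (sigmoidRatio x) = log (x ^ 2) - 2 * log |1 / 2 - exp (x / 6) / (1 + exp (x / 6))| :=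
  (log_sq_sub_two_mul_log_abs hx.ne' (half_sub_exp_div_one_add_exp_neg (by positivity)).ne).symm

lemma sigmoidRatio_one_le : sigmoidRatio 1 ≤ 579 := by
  have hexp := sum_le_exp_of_nonneg (x := 1 / 6) (by norm_num) 4
  norm_num [Finset.sum_range_succ, Nat.factorial] at hexp
  rw [sigmoidRatio]
  set E := exp (1 / 6)
  have hd : 1 / 2 - E / (1 + E) = (1 - E) / (2 * (1 + E)) := by
    field_simp
    ring
  rw [hd, div_pow, one_pow, one_div_div, div_le_iff₀ (by nlinarith)]
  nlinarith

/-- g(x) = ln(x²) − 2 ln|1/2 − e^{x/6}/(1+e^{x/6})| is nondecreasing on (0,1]; consequently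
f(x) = x²/(1/2 − e^{x/6}/(1+e^{x/6}))² is nondecreasing on (0,1] and f(x) ≤ f(1) ≤ 579. -/
theorem sigmoid_ratio_monotone :
    MonotoneOn (fun x : ℝ =>
        Real.log (x ^ 2) - 2 * Real.log |1/2 - Real.exp (x/6) / (1 + Real.exp (x/6))|)
      (Set.Ioc 0 1) ∧
    MonotoneOn (fun x : ℝ =>
        x ^ 2 / (1/2 - Real.exp (x/6) / (1 + Real.exp (x/6))) ^ 2)
      (Set.Ioc 0 1) ∧
    (∀ x ∈ Set.Ioc (0:ℝ) 1,
        x ^ 2 / (1/2 - Real.exp (x/6) / (1 + Real.exp (x/6))) ^ 2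
          ≤ (1:ℝ) ^ 2 / (1/2 - Real.exp (1/6) / (1 + Real.exp (1/6))) ^ 2) ∧
    (1:ℝ) ^ 2 / (1/2 - Real.exp (1/6) / (1 + Real.exp (1/6))) ^ 2 ≤ 579 := by
  have hmono : MonotoneOn sigmoidRatio (Ioc 0 1) :=
    monotoneOn_sigmoidRatio.mono Ioc_subset_Ioi_self
  refine ⟨fun x hx y hy hxy => ?_, hmono, fun x hx => hmono hx ⟨one_pos, le_rfl⟩ hx.2,
    sigmoidRatio_one_le⟩
  simpa only [log_sigmoidRatio hx.1, log_sigmoidRatio hy.1] using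
    log_le_log (sigmoidRatio_pos hx.1) (hmono hx hy hxy)
end
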